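/- Let A₁, …, A_m ∈ 𝕊^n, b ∈ ℝ^m, R_A ≥ ‖𝒜‖, R_Y > 0, and ε₀,ε₁ ≥ 0, ε₂ > 0; set δ := ε₁ R_A / √ε₂ and R_λ := 2(R_A R_Y² + ‖b‖). Suppose Y ∈ ℝ^{n×p} (p ≤ n) is a spurious ε-AC point: (i) ‖S(YYᵀ)Y‖ ≤ ε₁ and S(YYᵀ) • UUᵀ + 4‖𝒜(UYᵀ)‖² ≥ −ε₂ for all U ∈ ℝ^{n×p} with ‖U‖ = 1; (ii) YYᵀ is not (ε₀, R_Y ε₁, 5ε₂)-approximately optimal for the least squares problem; (iii) ‖Y‖ ≤ R_Y. Then the vector λ := 2(𝒜(YYᵀ) − b) satisfies 2ε₀ < ‖λ‖ ≤ R_λ, and 𝒜*(λ) lies within Frobenius distance δ of the set 𝕊^n_{n−p} of symmetric matrices of rank at most n−p. -/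

import Mathlib

open Matrix BigOperators

/-- Frobenius norm of a real matrix. -/
noncomputable def frob {n p : ℕ} (M : Matrix (Fin n) (Fin p) ℝ) : ℝ :=
  Real.sqrt (∑ i, ∑ j, (M i j) ^ 2)

/-- The linear map `𝒜 : 𝕊^n → ℝ^m`, `𝒜(X) = (A₁ • X, …, A_m • X)`. -/
noncomputable def amap {n m : ℕ} (A : Fin m → Matrix (Fin n) (Fin n) ℝ)
    (X : Matrix (Fin n) (Fin n) ℝ) : EuclideanSpace ℝ (Fin m) :=
  WithLp.toLp 2 (fun i => (A i * X).trace : Fin m → ℝ)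

/-- The adjoint map `𝒜*(λ) = ∑ᵢ λᵢ Aᵢ`. -/
noncomputable def adjmap {n m : ℕ} (A : Fin m → Matrix (Fin n) (Fin n) ℝ)
    (lam : EuclideanSpace ℝ (Fin m)) : Matrix (Fin n) (Fin n) ℝ :=
  ∑ i, lam i • A i

/-- Operator norm of `𝒜` (Frobenius norm on the domain, Euclidean norm on the codomain). -/
noncomputable def aOpNorm {n m : ℕ} (A : Fin m → Matrix (Fin n) (Fin n) ℝ) : ℝ :=
  sInf {c | 0 ≤ c ∧ ∀ X : Matrix (Fin n) (Fin n) ℝ, ‖amap A X‖ ≤ c * frob X}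

/-- The gradient `S(X) = 2𝒜*(𝒜(X) − b)` of the least squares objective. -/
noncomputable def lsGrad {n m : ℕ} (A : Fin m → Matrix (Fin n) (Fin n) ℝ)
    (b : EuclideanSpace ℝ (Fin m)) (X : Matrix (Fin n) (Fin n) ℝ) :
    Matrix (Fin n) (Fin n) ℝ :=
  (2 : ℝ) • adjmap A (amap A X - b)


set_option linter.dupNamespace false
set_option maxHeartbeats 1600000

namespace SpAux
variable {n m p q : ℕ}


noncomputable def frobSq {n p : ℕ} (M : Matrix (Fin n) (Fin p) ℝ) : ℝ := ∑ i, ∑ j, M i j ^ 2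


lemma frobSq_nonneg (M : Matrix (Fin n) (Fin p) ℝ) : 0 ≤ frobSq M := by
  refine Finset.sum_nonneg fun i _ => Finset.sum_nonneg fun j _ => sq_nonneg _

lemma frob_eq (M : Matrix (Fin n) (Fin p) ℝ) : frob M = Real.sqrt (frobSq M) := rfl

lemma frob_nonneg (M : Matrix (Fin n) (Fin p) ℝ) : 0 ≤ frob M := Real.sqrt_nonneg _

lemma frobSq_eq_sq (M : Matrix (Fin n) (Fin p) ℝ) : frobSq M = frob M ^ 2 := by
  rw [frob_eq, Real.sq_sqrt (frobSq_nonneg M)]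

lemma frob_le_of {c : ℝ} (M : Matrix (Fin n) (Fin p) ℝ) (h : frobSq M ≤ c ^ 2) (hc : 0 ≤ c) :
    frob M ≤ c := by
  rw [frob_eq]
  calc Real.sqrt (frobSq M) ≤ Real.sqrt (c ^ 2) := Real.sqrt_le_sqrt h
  _ = c := Real.sqrt_sq hc

lemma frobSq_le_of {c : ℝ} (M : Matrix (Fin n) (Fin p) ℝ) (h : frob M ≤ c) :
    frobSq M ≤ c ^ 2 := by
  rw [frobSq_eq_sq]
  exact pow_le_pow_left₀ (frob_nonneg M) h 2

lemma frobSq_transpose (M : Matrix (Fin n) (Fin p) ℝ) : frobSq Mᵀ = frobSq M :=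
  Finset.sum_comm

lemma frobSq_eq_trace (M : Matrix (Fin n) (Fin p) ℝ) : frobSq M = (Mᵀ * M).trace := by
  simp only [frobSq, trace, Matrix.mul_apply, diag, transpose_apply]
  rw [Finset.sum_comm]
  exact Finset.sum_congr rfl fun j _ => Finset.sum_congr rfl fun i _ => by ring

lemma frobSq_mul_le (M : Matrix (Fin n) (Fin p) ℝ) (N : Matrix (Fin p) (Fin q) ℝ) :
    frobSq (M * N) ≤ frobSq M * frobSq N := by
  have h : ∀ i j, (M * N) i j ^ 2 ≤ (∑ k, M i k ^ 2) * (∑ k, N k j ^ 2) := by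
    intro i j
    simpa [Matrix.mul_apply] using Finset.sum_mul_sq_le_sq_mul_sq Finset.univ (M i) (N · j)
  calc frobSq (M * N) ≤ ∑ i, ∑ j, (∑ k, M i k ^ 2) * (∑ k, N k j ^ 2) := by
        refine Finset.sum_le_sum fun i _ => Finset.sum_le_sum fun j _ => h i j
  _ = frobSq M * frobSq N := by
        rw [frobSq, frobSq, Finset.sum_mul]
        refine Finset.sum_congr rfl fun i _ => ?_
        rw [← Finset.mul_sum, Finset.sum_comm (s := Finset.univ)]

lemma frobSq_smul (c : ℝ) (M : Matrix (Fin n) (Fin p) ℝ) : frobSq (c • M) = c ^ 2 * frobSq M := by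
  simp only [frobSq, Matrix.smul_apply, smul_eq_mul, mul_pow, Finset.mul_sum]

lemma eq_zero_of_frobSq (M : Matrix (Fin n) (Fin p) ℝ) (h : frobSq M = 0) : M = 0 := by
  ext i j
  have h1 : ∀ i ∈ Finset.univ, (0:ℝ) ≤ ∑ j, M i j ^ 2 :=
    fun i _ => Finset.sum_nonneg fun j _ => sq_nonneg _
  have h2 := (Finset.sum_eq_zero_iff_of_nonneg h1).1 h i (Finset.mem_univ i)
  have h3 := (Finset.sum_eq_zero_iff_of_nonneg (fun j _ => sq_nonneg (M i j))).1 h2 j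
    (Finset.mem_univ j)
  exact pow_eq_zero_iff (n := 2) (by norm_num) |>.1 h3

lemma frobSq_vecMulVec (x : Fin n → ℝ) (z : Fin p → ℝ) :
    frobSq (vecMulVec x z) = (∑ i, x i ^ 2) * (∑ j, z j ^ 2) := by
  simp only [frobSq, vecMulVec_apply, mul_pow, ← Finset.mul_sum, ← Finset.sum_mul]

lemma frobSq_mul_le_op {c : ℝ} (M : Matrix (Fin n) (Fin p) ℝ) (N : Matrix (Fin p) (Fin q) ℝ)
    (hN : ∀ v : Fin p → ℝ, ∑ j, (v ᵥ* N) j ^ 2 ≤ c * ∑ i, v i ^ 2) :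
    frobSq (M * N) ≤ c * frobSq M := by
  have h : ∀ i, ∑ j, (M * N) i j ^ 2 ≤ c * ∑ k, M i k ^ 2 := by
    intro i
    have := hN (M i)
    simpa [Matrix.mul_apply, Matrix.vecMul, dotProduct] using this
  calc frobSq (M * N) ≤ ∑ i, c * ∑ k, M i k ^ 2 := Finset.sum_le_sum fun i _ => h i
  _ = c * frobSq M := by rw [frobSq, Finset.mul_sum]

lemma enorm_sq {m : ℕ} (v : EuclideanSpace ℝ (Fin m)) : ‖v‖ ^ 2 = ∑ i, v i ^ 2 := by
  rw [EuclideanSpace.norm_eq, Real.sq_sqrt (Finset.sum_nonneg fun i _ => sq_nonneg _)]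
  exact Finset.sum_congr rfl fun i _ => by rw [Real.norm_eq_abs, sq_abs]






/-- pick a subset of card k on which `a` is smallest -/
lemma exists_bottom (a : Fin n → ℝ) (k : ℕ) (hk : k ≤ n) :
    ∃ T : Finset (Fin n), T.card = k ∧ ∀ i ∈ T, ∀ j ∉ T, a i ≤ a j := by
  induction k with
  | zero => exact ⟨∅, rfl, by simp⟩
  | succ k ih =>
    obtain ⟨T, hcard, hmin⟩ := ih (Nat.le_of_succ_le hk)
    have hne : (Finset.univ \ T).Nonempty := by
      rw [← Finset.card_pos, Finset.card_sdiff_of_subset (Finset.subset_univ T)]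
      simp only [Finset.card_univ, Fintype.card_fin, hcard]
      omega
    obtain ⟨j₀, hj₀mem, hj₀min⟩ := Finset.exists_min_image (Finset.univ \ T) a hne
    have hj₀T : j₀ ∉ T := (Finset.mem_sdiff.1 hj₀mem).2
    refine ⟨insert j₀ T, ?_, ?_⟩
    · rw [Finset.card_insert_of_notMem hj₀T, hcard]
    · intro i hi j hj
      have hjT : j ∉ T := fun h => hj (Finset.mem_insert_of_mem h)
      rcases Finset.mem_insert.1 hi with h | h
      · subst h
        exact hj₀min j (Finset.mem_sdiff.2 ⟨Finset.mem_univ j, hjT⟩)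
      · exact hmin i h j hjT

lemma ky_fan (a r : Fin n → ℝ) (ha : ∀ i, 0 ≤ a i) (hr0 : ∀ i, 0 ≤ r i) (hr1 : ∀ i, r i ≤ 1)
    (T : Finset (Fin n)) (hT : ∀ i ∈ T, ∀ j ∉ T, a i ≤ a j)
    (hsum : ∑ i, r i = (T.card : ℝ)) :
    ∑ i ∈ T, a i ≤ ∑ i, a i * r i := by
  rcases T.eq_empty_or_nonempty with h | h
  · subst h
    simp only [Finset.sum_empty]
    exact Finset.sum_nonneg fun i _ => mul_nonneg (ha i) (hr0 i)
  obtain ⟨i₀, hi₀mem, hi₀max⟩ := Finset.exists_max_image T a h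
  set t := a i₀ with ht
  have key : ∀ i, a i * r i - (if i ∈ T then a i else 0) ≥ t * r i - (if i ∈ T then t else 0) := by
    intro i
    by_cases hi : i ∈ T
    · simp only [hi, if_pos]
      have h1 : a i ≤ t := hi₀max i hi
      nlinarith [hr1 i, hr0 i]
    · simp only [hi, if_neg, not_false_iff, sub_zero]
      have h1 : t ≤ a i := hT i₀ hi₀mem i hi
      nlinarith [hr0 i]
  have h2 : ∑ i, (a i * r i - (if i ∈ T then a i else 0)) ≥
      ∑ i, (t * r i - (if i ∈ T then t else 0)) := Finset.sum_le_sum fun i _ => key i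
  have h3 : ∑ i, (if i ∈ T then a i else 0) = ∑ i ∈ T, a i := by
    rw [Finset.sum_ite_mem, Finset.univ_inter]
  have h4 : ∑ i, (if i ∈ T then t else 0) = t * T.card := by
    rw [Finset.sum_ite_mem, Finset.univ_inter, Finset.sum_const, nsmul_eq_mul, mul_comm]
  have h5 : ∑ i, (t * r i) = t * T.card := by rw [← Finset.mul_sum, hsum]
  simp only [Finset.sum_sub_distrib, h3, h4, h5] at h2
  linarith




lemma trace_mul_sq_le (B X : Matrix (Fin n) (Fin n) ℝ) :
    ((B * X).trace) ^ 2 ≤ frobSq B * frobSq X := by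
  have h1 : (B * X).trace = ∑ q : Fin n × Fin n, B q.1 q.2 * X q.2 q.1 := by
    rw [Matrix.trace, Fintype.sum_prod_type]
    simp only [Matrix.diag, Matrix.mul_apply]
  rw [h1]
  calc (∑ q : Fin n × Fin n, B q.1 q.2 * X q.2 q.1) ^ 2
      ≤ (∑ q : Fin n × Fin n, B q.1 q.2 ^ 2) * (∑ q : Fin n × Fin n, X q.2 q.1 ^ 2) :=
        Finset.sum_mul_sq_le_sq_mul_sq Finset.univ _ _
  _ = frobSq B * frobSq X := by
      rw [frobSq, frobSq, Fintype.sum_prod_type, Fintype.sum_prod_type]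
      congr 1
      exact Finset.sum_comm

lemma amap_apply (A : Fin m → Matrix (Fin n) (Fin n) ℝ) (X : Matrix (Fin n) (Fin n) ℝ)
    (i : Fin m) : amap A X i = (A i * X).trace := rfl

lemma amap_norm_sq (A : Fin m → Matrix (Fin n) (Fin n) ℝ) (X : Matrix (Fin n) (Fin n) ℝ) :
    ‖amap A X‖ ^ 2 = ∑ i, ((A i * X).trace) ^ 2 := by
  rw [enorm_sq]
  rfl

lemma aOpNorm_nonneg (A : Fin m → Matrix (Fin n) (Fin n) ℝ) : 0 ≤ aOpNorm A := by
  apply le_csInf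
  · refine ⟨Real.sqrt (∑ i, frobSq (A i)), Real.sqrt_nonneg _, fun X => ?_⟩
    have h2 : ‖amap A X‖ ^ 2 ≤ (∑ i, frobSq (A i)) * frobSq X := by
      rw [amap_norm_sq]
      calc ∑ i, ((A i * X).trace) ^ 2 ≤ ∑ i, frobSq (A i) * frobSq X :=
            Finset.sum_le_sum fun i _ => trace_mul_sq_le (A i) X
      _ = _ := by rw [← Finset.sum_mul]
    calc ‖amap A X‖ = Real.sqrt (‖amap A X‖ ^ 2) := (Real.sqrt_sq (norm_nonneg _)).symm
    _ ≤ Real.sqrt ((∑ i, frobSq (A i)) * frobSq X) := Real.sqrt_le_sqrt h2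
    _ = Real.sqrt (∑ i, frobSq (A i)) * frob X := by
        rw [Real.sqrt_mul (Finset.sum_nonneg fun i _ => frobSq_nonneg _), frob_eq]
  · exact fun c hc => hc.1

lemma amap_zero (A : Fin m → Matrix (Fin n) (Fin n) ℝ) : amap A 0 = 0 := by
  apply PiLp.ext
  intro i
  simp [amap_apply]

lemma amap_norm_le (A : Fin m → Matrix (Fin n) (Fin n) ℝ) (X : Matrix (Fin n) (Fin n) ℝ) :
    ‖amap A X‖ ≤ aOpNorm A * frob X := by
  have hne : {c | 0 ≤ c ∧ ∀ X : Matrix (Fin n) (Fin n) ℝ, ‖amap A X‖ ≤ c * frob X}.Nonempty := by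
    refine ⟨Real.sqrt (∑ i, frobSq (A i)), Real.sqrt_nonneg _, fun X => ?_⟩
    have h2 : ‖amap A X‖ ^ 2 ≤ (∑ i, frobSq (A i)) * frobSq X := by
      rw [amap_norm_sq]
      calc ∑ i, ((A i * X).trace) ^ 2 ≤ ∑ i, frobSq (A i) * frobSq X :=
            Finset.sum_le_sum fun i _ => trace_mul_sq_le (A i) X
      _ = _ := by rw [← Finset.sum_mul]
    calc ‖amap A X‖ = Real.sqrt (‖amap A X‖ ^ 2) := (Real.sqrt_sq (norm_nonneg _)).symm
    _ ≤ Real.sqrt ((∑ i, frobSq (A i)) * frobSq X) := Real.sqrt_le_sqrt h2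
    _ = Real.sqrt (∑ i, frobSq (A i)) * frob X := by
        rw [Real.sqrt_mul (Finset.sum_nonneg fun i _ => frobSq_nonneg _), frob_eq]
  rcases eq_or_lt_of_le (frobSq_nonneg X) with h | h
  · have hX : X = 0 := eq_zero_of_frobSq X h.symm
    subst hX
    rw [amap_zero, norm_zero, frob_eq, ← h, Real.sqrt_zero, mul_zero]
  · have hfrob : 0 < frob X := by rw [frob_eq]; exact Real.sqrt_pos.2 h
    have key : ‖amap A X‖ / frob X ≤ aOpNorm A := by
      apply le_csInf hne
      intro c hc
      rw [div_le_iff₀ hfrob]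
      exact hc.2 X
    calc ‖amap A X‖ = (‖amap A X‖ / frob X) * frob X := by field_simp
    _ ≤ aOpNorm A * frob X := mul_le_mul_of_nonneg_right key (le_of_lt hfrob)




lemma vecMulVec_transpose' (x : Fin n → ℝ) (z : Fin p → ℝ) :
    (vecMulVec x z)ᵀ = vecMulVec z x := by
  ext i j; simp [vecMulVec_apply, mul_comm]

lemma vecMulVec_mul_right (x : Fin n → ℝ) (z : Fin p → ℝ) (M : Matrix (Fin p) (Fin q) ℝ) :
    vecMulVec x z * M = vecMulVec x (z ᵥ* M) := by
  ext i j
  simp [vecMulVec_apply, Matrix.mul_apply, Matrix.vecMul, dotProduct, Finset.mul_sum, mul_assoc]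

lemma vecMulVec_mul_vecMulVec (x : Fin n → ℝ) (z w : Fin p → ℝ) (y : Fin q → ℝ) :
    vecMulVec x z * vecMulVec w y = (z ⬝ᵥ w) • vecMulVec x y := by
  rw [vecMulVec_mul_right]
  ext i j
  simp [vecMulVec_apply, Matrix.vecMul, dotProduct, Finset.sum_mul, Finset.mul_sum]
  exact Finset.sum_congr rfl fun k _ => by ring

lemma trace_mul_vecMulVec (S : Matrix (Fin n) (Fin n) ℝ) (x y : Fin n → ℝ) :
    (S * vecMulVec x y).trace = y ⬝ᵥ (S *ᵥ x) := by
  simp only [Matrix.trace, Matrix.diag, Matrix.mul_apply, vecMulVec_apply, dotProduct,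
    Matrix.mulVec, Finset.mul_sum]
  exact Finset.sum_congr rfl fun i _ => Finset.sum_congr rfl fun k _ => by ring

lemma conj_diag (Q M : Matrix (Fin n) (Fin n) ℝ) (i : Fin n) :
    (Qᵀ * M * Q) i i = (fun j => Q j i) ⬝ᵥ (M *ᵥ fun j => Q j i) := by
  simp only [Matrix.mul_apply, transpose_apply, dotProduct, Matrix.mulVec, Finset.sum_mul,
    Finset.mul_sum]
  rw [Finset.sum_comm]
  exact Finset.sum_congr rfl fun k _ => Finset.sum_congr rfl fun j _ => by ring

lemma normalize_sq {k : ℕ} (v : Fin k → ℝ) (h : 0 < ∑ i, v i ^ 2) :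
    ∑ i, ((Real.sqrt (∑ j, v j ^ 2))⁻¹ • v) i ^ 2 = 1 := by
  simp only [Pi.smul_apply, smul_eq_mul, mul_pow, ← Finset.mul_sum, inv_pow]
  rw [Real.sq_sqrt h.le, inv_mul_cancel₀ (ne_of_gt h)]

lemma sum_sq_smul {k : ℕ} (c : ℝ) (v : Fin k → ℝ) :
    ∑ i, (c • v) i ^ 2 = c ^ 2 * ∑ i, v i ^ 2 := by
  simp only [Pi.smul_apply, smul_eq_mul, mul_pow, ← Finset.mul_sum]

lemma dot_self_eq_sum_sq (v : Fin n → ℝ) : v ⬝ᵥ v = ∑ i, v i ^ 2 := by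
  simp [dotProduct, sq]


end SpAux

open SpAux in
/-- If `Y` is a spurious `ε`-AC point for the least squares Burer–Monteiro
problem, then `λ := 2(𝒜(YYᵀ) − b)` satisfies `2ε₀ < ‖λ‖ ≤ R_λ = 2(R_A R_Y² + ‖b‖)` and
`𝒜*(λ)` lies within Frobenius distance `δ = ε₁R_A/√ε₂` of the set of symmetric matrices of
rank at most `n−p`. -/
theorem ls_spurious_ac_in_tube {n m p : ℕ} (hpn : p ≤ n)
    (A : Fin m → Matrix (Fin n) (Fin n) ℝ) (hA : ∀ i, (A i).IsSymm)
    (b : EuclideanSpace ℝ (Fin m))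
    (ε₀ ε₁ ε₂ RA RY δ Rlam : ℝ)
    (hε₀ : 0 ≤ ε₀) (hε₁ : 0 ≤ ε₁) (hε₂ : 0 < ε₂) (hRY : 0 < RY)
    (hRA : aOpNorm A ≤ RA)
    (hδ : δ = ε₁ * RA / Real.sqrt ε₂)
    (hRlam : Rlam = 2 * (RA * RY ^ 2 + ‖b‖))
    (Y : Matrix (Fin n) (Fin p) ℝ)
    -- (i) Y is (ε₁,ε₂)-approximately 2-critical for (BM_ls)
    (hcrit1 : frob (lsGrad A b (Y * Yᵀ) * Y) ≤ ε₁)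
    (hcrit2 : ∀ U : Matrix (Fin n) (Fin p) ℝ, frob U = 1 →
      -ε₂ ≤ (lsGrad A b (Y * Yᵀ) * (U * Uᵀ)).trace + 4 * ‖amap A (U * Yᵀ)‖ ^ 2)
    -- (ii) YYᵀ is not (ε₀, R_Y ε₁, 5ε₂)-approximately optimal for (SDP_ls)
    (hnotopt : ¬((Y * Yᵀ).PosSemidef ∧
      (‖amap A (Y * Yᵀ) - b‖ ≤ ε₀ ∨
        (frob (lsGrad A b (Y * Yᵀ) * (Y * Yᵀ)) ≤ RY * ε₁ ∧
         (lsGrad A b (Y * Yᵀ) + (5 * ε₂) • (1 : Matrix (Fin n) (Fin n) ℝ)).PosSemidef))))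
    -- (iii) norm bound
    (hY : frob Y ≤ RY) :
    (2 * ε₀ < ‖(2 : ℝ) • (amap A (Y * Yᵀ) - b)‖ ∧
     ‖(2 : ℝ) • (amap A (Y * Yᵀ) - b)‖ ≤ Rlam) ∧
    ∃ W : Matrix (Fin n) (Fin n) ℝ, W.IsSymm ∧ W.rank ≤ n - p ∧
      frob (adjmap A ((2 : ℝ) • (amap A (Y * Yᵀ) - b)) - W) ≤ δ := by
  classical
  set S : Matrix (Fin n) (Fin n) ℝ := lsGrad A b (Y * Yᵀ) with hSdef
  -- basic facts
  have hRA0 : 0 ≤ RA := le_trans (aOpNorm_nonneg A) hRA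
  have amapRA : ∀ X : Matrix (Fin n) (Fin n) ℝ, ‖amap A X‖ ≤ RA * frob X := fun X =>
    (amap_norm_le A X).trans (mul_le_mul_of_nonneg_right hRA (frob_nonneg X))
  have hXpsd : (Y * Yᵀ).PosSemidef := by
    have h := Matrix.posSemidef_self_mul_conjTranspose Y
    rwa [conjTranspose_eq_transpose_of_trivial] at h
  have hadj : adjmap A ((2 : ℝ) • (amap A (Y * Yᵀ) - b)) = S := by
    rw [hSdef, lsGrad, adjmap, adjmap, Finset.smul_sum]
    exact Finset.sum_congr rfl fun i _ => by
      rw [PiLp.smul_apply, smul_eq_mul, mul_smul]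
  rcases not_and_or.1 hnotopt with h | h
  · exact absurd hXpsd h
  obtain ⟨hb0, hno2⟩ := not_or.1 h
  have hb0' : ε₀ < ‖amap A (Y * Yᵀ) - b‖ := not_le.1 hb0
  have hnorm2 : ‖(2 : ℝ) • (amap A (Y * Yᵀ) - b)‖ = 2 * ‖amap A (Y * Yᵀ) - b‖ := by
    rw [norm_smul]
    norm_num
  have hfrobYYt : frob (Y * Yᵀ) ≤ RY ^ 2 := by
    apply frob_le_of _ _ (sq_nonneg RY)
    have h1 : frobSq Y ≤ RY ^ 2 := frobSq_le_of Y hY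
    calc frobSq (Y * Yᵀ) ≤ frobSq Y * frobSq Yᵀ := frobSq_mul_le Y Yᵀ
    _ = frobSq Y * frobSq Y := by rw [frobSq_transpose]
    _ ≤ RY ^ 2 * RY ^ 2 := by nlinarith [frobSq_nonneg Y]
    _ = (RY ^ 2) ^ 2 := by ring
  have part1 : 2 * ε₀ < ‖(2 : ℝ) • (amap A (Y * Yᵀ) - b)‖ ∧
      ‖(2 : ℝ) • (amap A (Y * Yᵀ) - b)‖ ≤ Rlam := by
    constructor
    · rw [hnorm2]; linarith
    · rw [hnorm2, hRlam]
      have h1 : ‖amap A (Y * Yᵀ) - b‖ ≤ ‖amap A (Y * Yᵀ)‖ + ‖b‖ := norm_sub_le _ _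
      have h2 : ‖amap A (Y * Yᵀ)‖ ≤ RA * RY ^ 2 :=
        (amapRA _).trans (mul_le_mul_of_nonneg_left hfrobYYt hRA0)
      linarith
  refine ⟨part1, ?_⟩
  -- frob (S * (Y * Yᵀ)) ≤ RY * ε₁, hence S + 5ε₂ I is not PSD
  have hfrobSY : frobSq (S * Y) ≤ ε₁ ^ 2 := frobSq_le_of _ hcrit1
  have hSX : frob (S * (Y * Yᵀ)) ≤ RY * ε₁ := by
    apply frob_le_of _ _ (mul_nonneg hRY.le hε₁)
    rw [← Matrix.mul_assoc]
    calc frobSq (S * Y * Yᵀ) ≤ frobSq (S * Y) * frobSq Yᵀ := frobSq_mul_le _ _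
    _ = frobSq (S * Y) * frobSq Y := by rw [frobSq_transpose]
    _ ≤ ε₁ ^ 2 * RY ^ 2 := by
        have := frobSq_le_of Y hY
        nlinarith [frobSq_nonneg (S * Y), frobSq_nonneg Y]
    _ = (RY * ε₁) ^ 2 := by ring
  have hSneg : ¬(S + (5 * ε₂) • (1 : Matrix (Fin n) (Fin n) ℝ)).PosSemidef := by
    intro hpsd
    exact hno2 ⟨hSX, hpsd⟩
  have hSsymm : S.IsSymm := by
    rw [hSdef, lsGrad]
    apply Matrix.IsSymm.smul
    unfold Matrix.IsSymm
    rw [adjmap, Matrix.transpose_sum]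
    exact Finset.sum_congr rfl fun i _ => by rw [transpose_smul, hA i]
  have hSherm : S.IsHermitian := by
    rw [Matrix.IsHermitian, conjTranspose_eq_transpose_of_trivial]
    exact hSsymm
  -- extract a direction of negative curvature
  have hSherm5 : (S + (5 * ε₂) • (1 : Matrix (Fin n) (Fin n) ℝ)).IsHermitian := by
    rw [Matrix.IsHermitian, conjTranspose_add, conjTranspose_smul,
      conjTranspose_eq_transpose_of_trivial, hSsymm, conjTranspose_one]
    norm_num
  obtain ⟨x, hx⟩ : ∃ x : Fin n → ℝ, (star x) ⬝ᵥ ((S + (5 * ε₂) • 1) *ᵥ x) < 0 := by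
    by_contra hcon
    push_neg at hcon
    exact hSneg (Matrix.posSemidef_iff_dotProduct_mulVec.2 ⟨hSherm5, hcon⟩)
  rw [star_trivial] at hx
  have hxS : x ⬝ᵥ (S *ᵥ x) + 5 * ε₂ * (∑ i, x i ^ 2) < 0 := by
    have h1 : (S + (5 * ε₂) • (1 : Matrix (Fin n) (Fin n) ℝ)) *ᵥ x
        = S *ᵥ x + (5 * ε₂) • x := by
      rw [Matrix.add_mulVec, Matrix.smul_mulVec, Matrix.one_mulVec]
    rw [h1, dotProduct_add, dotProduct_smul, smul_eq_mul, dot_self_eq_sum_sq] at hx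
    linarith
  have hxne : x ≠ 0 := by
    intro h0
    rw [h0] at hx
    simp at hx
  have hX2pos : 0 < ∑ i, x i ^ 2 := by
    rcases lt_or_eq_of_le (Finset.sum_nonneg fun i (_ : i ∈ Finset.univ) => sq_nonneg (x i))
      with h | h
    · exact h
    · exfalso
      have : x = 0 := by
        funext i
        have := (Finset.sum_eq_zero_iff_of_nonneg
          (fun i (_ : i ∈ Finset.univ) => sq_nonneg (x i))).1 h.symm i (Finset.mem_univ i)
        exact pow_eq_zero_iff (n := 2) (by norm_num) |>.1 this
      exact hxne this
  -- normalized negative-curvature vector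
  set xh : Fin n → ℝ := (Real.sqrt (∑ i, x i ^ 2))⁻¹ • x with hxh
  have hsqX : Real.sqrt (∑ i, x i ^ 2) ^ 2 = ∑ i, x i ^ 2 := Real.sq_sqrt hX2pos.le
  have hxh1 : ∑ i, xh i ^ 2 = 1 := by
    rw [hxh]
    simp only [Pi.smul_apply, smul_eq_mul, mul_pow, ← Finset.mul_sum, inv_pow]
    rw [hsqX, inv_mul_cancel₀ (ne_of_gt hX2pos)]
  have hxhS : xh ⬝ᵥ (S *ᵥ xh) < -(5 * ε₂) := by
    have e1 : xh ⬝ᵥ (S *ᵥ xh) = ((∑ i, x i ^ 2)⁻¹) * (x ⬝ᵥ (S *ᵥ x)) := by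
      rw [hxh, Matrix.mulVec_smul, dotProduct_smul, smul_dotProduct]
      rw [smul_eq_mul, smul_eq_mul, ← mul_assoc, ← sq, inv_pow, hsqX]
    have hlt : x ⬝ᵥ (S *ᵥ x) < -(5 * ε₂) * (∑ i, x i ^ 2) := by linarith
    rw [e1]
    calc (∑ i, x i ^ 2)⁻¹ * (x ⬝ᵥ (S *ᵥ x))
        < (∑ i, x i ^ 2)⁻¹ * (-(5 * ε₂) * (∑ i, x i ^ 2)) :=
          mul_lt_mul_of_pos_left hlt (inv_pos.2 hX2pos)
    _ = -(5 * ε₂) := by field_simp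
  have amap_smul : ∀ (c : ℝ) (M : Matrix (Fin n) (Fin n) ℝ), amap A (c • M) = c • amap A M := by
    intro c M
    apply PiLp.ext
    intro i
    rw [amap_apply, PiLp.smul_apply, amap_apply, Matrix.mul_smul, trace_smul, smul_eq_mul]
  have key : ∀ u : Fin n → ℝ, ∀ z : Fin p → ℝ, (∑ i, u i ^ 2) = 1 → (∑ j, z j ^ 2) = 1 →
      u ⬝ᵥ (S *ᵥ u) < -(5 * ε₂) → ε₂ ≤ RA ^ 2 * ∑ i, (Y *ᵥ z) i ^ 2 := by
    intro u z hu hz huS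
    have hUfrob : frob (vecMulVec u z) = 1 := by
      rw [frob_eq, frobSq_vecMulVec, hu, hz, one_mul, Real.sqrt_one]
    have h2 := hcrit2 (vecMulVec u z) hUfrob
    have e1 : (S * (vecMulVec u z * (vecMulVec u z)ᵀ)).trace = u ⬝ᵥ (S *ᵥ u) := by
      rw [vecMulVec_transpose', SpAux.vecMulVec_mul_vecMulVec, dot_self_eq_sum_sq, hz, one_smul,
        trace_mul_vecMulVec]
    have e2 : ‖amap A (vecMulVec u z * Yᵀ)‖ ^ 2 ≤ RA ^ 2 * ∑ i, (Y *ᵥ z) i ^ 2 := by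
      rw [vecMulVec_mul_right, vecMul_transpose]
      have h3 := amapRA (vecMulVec u (Y *ᵥ z))
      have h4 : frob (vecMulVec u (Y *ᵥ z)) ^ 2 = ∑ i, (Y *ᵥ z) i ^ 2 := by
        rw [← frobSq_eq_sq, frobSq_vecMulVec, hu, one_mul]
      calc ‖amap A (vecMulVec u (Y *ᵥ z))‖ ^ 2 ≤ (RA * frob (vecMulVec u (Y *ᵥ z))) ^ 2 :=
            pow_le_pow_left₀ (norm_nonneg _) h3 2
      _ = RA ^ 2 * ∑ i, (Y *ᵥ z) i ^ 2 := by rw [mul_pow, h4]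
    rw [e1] at h2
    linarith
  have hYlow : ∀ z : Fin p → ℝ, ε₂ * (∑ j, z j ^ 2) ≤ RA ^ 2 * ∑ i, (Y *ᵥ z) i ^ 2 := by
    intro z
    rcases eq_or_lt_of_le (Finset.sum_nonneg fun j (_ : j ∈ Finset.univ) => sq_nonneg (z j))
      with h | hZ2
    · have hz0 : z = 0 := by
        funext j
        exact pow_eq_zero_iff (n := 2) (by norm_num) |>.1
          ((Finset.sum_eq_zero_iff_of_nonneg fun j _ => sq_nonneg (z j)).1 h.symm j
            (Finset.mem_univ j))
      rw [hz0]
      simp [Matrix.mulVec_zero]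
    · set Z2 := ∑ j, z j ^ 2 with hZ2def
      set zh : Fin p → ℝ := (Real.sqrt Z2)⁻¹ • z with hzh
      have hzh1 : ∑ j, zh j ^ 2 = 1 := normalize_sq z hZ2
      have h5 := key xh zh hxh1 hzh1 hxhS
      have e3 : ∑ i, (Y *ᵥ zh) i ^ 2 = Z2⁻¹ * ∑ i, (Y *ᵥ z) i ^ 2 := by
        rw [hzh, Matrix.mulVec_smul, sum_sq_smul, inv_pow, Real.sq_sqrt hZ2.le]
      rw [e3] at h5
      have h6 := mul_le_mul_of_nonneg_right h5 hZ2.le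
      calc ε₂ * Z2 ≤ RA ^ 2 * (Z2⁻¹ * ∑ i, (Y *ᵥ z) i ^ 2) * Z2 := h6
      _ = RA ^ 2 * ∑ i, (Y *ᵥ z) i ^ 2 := by
          field_simp
  -- RA > 0
  have hRA2pos : 0 < RA ^ 2 ∨ p = 0 := by
    rcases Nat.eq_zero_or_pos p with h | hp
    · exact Or.inr h
    · left
      have h1 := hYlow (fun _ => 1)
      have h2 : (0:ℝ) < ∑ j : Fin p, (1:ℝ) ^ 2 := by
        simp only [one_pow, Finset.sum_const, Finset.card_univ, Fintype.card_fin, nsmul_eq_mul,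
          mul_one]
        exact_mod_cast hp
      nlinarith [Finset.sum_nonneg fun i (_ : i ∈ Finset.univ) =>
        sq_nonneg ((Y *ᵥ fun _ => (1:ℝ)) i)]
  -- Gram matrix
  set G : Matrix (Fin p) (Fin p) ℝ := Yᵀ * Y with hGdef
  have hGdot : ∀ z : Fin p → ℝ, z ⬝ᵥ (G *ᵥ z) = ∑ i, (Y *ᵥ z) i ^ 2 := by
    intro z
    rw [hGdef, ← Matrix.mulVec_mulVec, Matrix.dotProduct_mulVec, Matrix.vecMul_transpose,
      dot_self_eq_sum_sq]
  have hGpos : G.PosDef := by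
    rw [Matrix.posDef_iff_dotProduct_mulVec]
    constructor
    · rw [Matrix.IsHermitian, conjTranspose_eq_transpose_of_trivial, hGdef, transpose_mul,
        transpose_transpose]
    · intro z hz
      rw [star_trivial, hGdot]
      have hZ2 : 0 < ∑ j, z j ^ 2 := by
        rcases eq_or_lt_of_le (Finset.sum_nonneg fun j (_ : j ∈ Finset.univ) =>
          sq_nonneg (z j)) with h | h
        · exfalso
          apply hz
          funext j
          exact pow_eq_zero_iff (n := 2) (by norm_num) |>.1
            ((Finset.sum_eq_zero_iff_of_nonneg fun j _ => sq_nonneg (z j)).1 h.symm j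
              (Finset.mem_univ j))
        · exact h
      have h1 := hYlow z
      nlinarith [sq_nonneg RA, Finset.sum_nonneg fun i (_ : i ∈ Finset.univ) =>
        sq_nonneg ((Y *ᵥ z) i)]
  have hGdet : IsUnit G.det := isUnit_iff_ne_zero.2 (ne_of_gt hGpos.det_pos)
  have hGinv_mul : G⁻¹ * G = 1 := Matrix.nonsing_inv_mul G hGdet
  have hG_mulinv : G * G⁻¹ = 1 := Matrix.mul_nonsing_inv G hGdet
  have hGinvT : G⁻¹ᵀ = G⁻¹ := by
    rw [Matrix.transpose_nonsing_inv]
    congr 1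
    rw [hGdef, transpose_mul, transpose_transpose]
  -- projection onto the column space of Y
  set P : Matrix (Fin n) (Fin n) ℝ := Y * G⁻¹ * Yᵀ with hPdef
  have hPsymm : Pᵀ = P := by
    rw [hPdef, transpose_mul, transpose_mul, transpose_transpose, hGinvT, Matrix.mul_assoc]
  have hid : Yᵀ * (Y * (G⁻¹ * Yᵀ)) = Yᵀ := by
    rw [← Matrix.mul_assoc, ← Matrix.mul_assoc, ← hGdef, Matrix.mul_assoc, ← Matrix.mul_assoc,
      hG_mulinv, Matrix.one_mul]
  have hPP : P * P = P := by
    rw [hPdef]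
    calc Y * G⁻¹ * Yᵀ * (Y * G⁻¹ * Yᵀ) = Y * (G⁻¹ * (Yᵀ * (Y * (G⁻¹ * Yᵀ)))) := by
          simp only [Matrix.mul_assoc]
    _ = Y * (G⁻¹ * Yᵀ) := by rw [hid]
    _ = Y * G⁻¹ * Yᵀ := by rw [Matrix.mul_assoc]
  have hPtrace : P.trace = (p : ℝ) := by
    rw [hPdef, Matrix.trace_mul_comm (Y * G⁻¹) Yᵀ, ← Matrix.mul_assoc, ← hGdef, hG_mulinv,
      Matrix.trace_one]
    simp
  have hST : Sᵀ = S := hSsymm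
  have hProj0 : ∀ v : Fin n → ℝ, 0 ≤ v ⬝ᵥ (P *ᵥ v) ∧ v ⬝ᵥ (P *ᵥ v) ≤ v ⬝ᵥ v := by
    intro v
    have e : v ⬝ᵥ (P *ᵥ v) = (P *ᵥ v) ⬝ᵥ (P *ᵥ v) := by
      conv_lhs => rw [← hPP]
      rw [← Matrix.mulVec_mulVec, Matrix.dotProduct_mulVec]
      congr 1
      conv_lhs => rw [← hPsymm]
      rw [Matrix.vecMul_transpose]
    have hCS := Finset.sum_mul_sq_le_sq_mul_sq Finset.univ v (P *ᵥ v)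
    have h1 : v ⬝ᵥ (P *ᵥ v) = ∑ i, v i * (P *ᵥ v) i := rfl
    have h2 : (P *ᵥ v) ⬝ᵥ (P *ᵥ v) = ∑ i, (P *ᵥ v) i ^ 2 := dot_self_eq_sum_sq _
    have h3 : v ⬝ᵥ v = ∑ i, v i ^ 2 := dot_self_eq_sum_sq _
    have h4 : 0 ≤ ∑ i, (P *ᵥ v) i ^ 2 :=
      Finset.sum_nonneg fun i _ => sq_nonneg _
    have h5 : 0 ≤ ∑ i, v i ^ 2 := Finset.sum_nonneg fun i _ => sq_nonneg _
    constructor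
    · rw [e, h2]; exact h4
    · rw [e, h2, h3]
      nlinarith [e, h1, h2]
  -- spectral decomposition of S
  set μ : Fin n → ℝ := hSherm.eigenvalues with hμ
  set Q : Matrix (Fin n) (Fin n) ℝ := (hSherm.eigenvectorUnitary : Matrix (Fin n) (Fin n) ℝ)
    with hQ
  have hspec : S = Q * Matrix.diagonal μ * Qᵀ := by
    have h := hSherm.spectral_theorem
    rw [Unitary.conjStarAlgAut_apply, Matrix.star_eq_conjTranspose,
      conjTranspose_eq_transpose_of_trivial] at h
    exact h
  have hQQ' : Q * Qᵀ = 1 := by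
    have h := (Matrix.mem_unitaryGroup_iff).1 hSherm.eigenvectorUnitary.2
    rwa [Matrix.star_eq_conjTranspose, conjTranspose_eq_transpose_of_trivial] at h
  have hQQ : Qᵀ * Q = 1 := by
    have h := (Matrix.mem_unitaryGroup_iff').1 hSherm.eigenvectorUnitary.2
    rwa [Matrix.star_eq_conjTranspose, conjTranspose_eq_transpose_of_trivial] at h
  set r : Fin n → ℝ := fun i => (Qᵀ * P * Q) i i with hr
  have hr01 : ∀ i, 0 ≤ r i ∧ r i ≤ 1 := by
    intro i
    have hcol : (fun j => Q j i) ⬝ᵥ (fun j => Q j i) = 1 := by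
      have h1 : (Qᵀ * Q) i i = (1 : Matrix (Fin n) (Fin n) ℝ) i i := by rw [hQQ]
      rw [Matrix.one_apply_eq] at h1
      rw [← h1]
      simp [Matrix.mul_apply, dotProduct]
    have h2 := hProj0 (fun j => Q j i)
    have h3 : r i = (fun j => Q j i) ⬝ᵥ (P *ᵥ fun j => Q j i) := conj_diag Q P i
    rw [h3]
    exact ⟨h2.1, le_trans h2.2 (le_of_eq hcol)⟩
  have hrsum : ∑ i, r i = (p : ℝ) := by
    have h0 : ∑ i, r i = (Qᵀ * P * Q).trace := rfl
    rw [h0, Matrix.trace_mul_comm (Qᵀ * P) Q, ← Matrix.mul_assoc, hQQ', Matrix.one_mul, hPtrace]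
  have hSP : frobSq (S * P) = ∑ i, μ i ^ 2 * r i := by
    have e1 : frobSq (S * P) = (S * S * P).trace := by
      rw [frobSq_eq_trace, transpose_mul, hPsymm, hST]
      calc (P * S * (S * P)).trace = ((S * (S * P)) * P).trace := by
            rw [Matrix.mul_assoc, Matrix.trace_mul_comm]
      _ = (S * (S * (P * P))).trace := by simp only [Matrix.mul_assoc]
      _ = (S * S * P).trace := by rw [hPP, ← Matrix.mul_assoc]
    have e2 : S * S = Q * Matrix.diagonal (fun i => μ i ^ 2) * Qᵀ := by
      conv_lhs => rw [hspec]
      calc Q * Matrix.diagonal μ * Qᵀ * (Q * Matrix.diagonal μ * Qᵀ)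
          = Q * Matrix.diagonal μ * (Qᵀ * Q) * (Matrix.diagonal μ * Qᵀ) := by
            simp only [Matrix.mul_assoc]
      _ = Q * (Matrix.diagonal μ * Matrix.diagonal μ) * Qᵀ := by
            rw [hQQ, Matrix.mul_one]
            simp only [Matrix.mul_assoc]
      _ = Q * Matrix.diagonal (fun i => μ i ^ 2) * Qᵀ := by
            rw [Matrix.diagonal_mul_diagonal]
            simp only [← pow_two]
    rw [e1, e2]
    calc (Q * Matrix.diagonal (fun i => μ i ^ 2) * Qᵀ * P).trace
        = (Matrix.diagonal (fun i => μ i ^ 2) * (Qᵀ * P * Q)).trace := by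
          rw [Matrix.mul_assoc, Matrix.mul_assoc, Matrix.trace_mul_comm]
          simp only [Matrix.mul_assoc]
    _ = ∑ i, μ i ^ 2 * r i := by
          rw [Matrix.trace]
          exact Finset.sum_congr rfl fun i _ => by
            rw [Matrix.diag_apply, Matrix.diagonal_mul]
  -- conjugation helpers
  have conj_mul : ∀ w w' : Fin n → ℝ,
      (Q * Matrix.diagonal w * Qᵀ) * (Q * Matrix.diagonal w' * Qᵀ)
        = Q * Matrix.diagonal (fun i => w i * w' i) * Qᵀ := by
    intro w w'
    calc (Q * Matrix.diagonal w * Qᵀ) * (Q * Matrix.diagonal w' * Qᵀ)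
        = Q * Matrix.diagonal w * (Qᵀ * Q) * (Matrix.diagonal w' * Qᵀ) := by
          simp only [Matrix.mul_assoc]
    _ = Q * (Matrix.diagonal w * Matrix.diagonal w') * Qᵀ := by
          rw [hQQ, Matrix.mul_one]
          simp only [Matrix.mul_assoc]
    _ = Q * Matrix.diagonal (fun i => w i * w' i) * Qᵀ := by
          rw [Matrix.diagonal_mul_diagonal]
  have conj_trace : ∀ w : Fin n → ℝ, (Q * Matrix.diagonal w * Qᵀ).trace = ∑ i, w i := by
    intro w
    have h1 : (Q * Matrix.diagonal w * Qᵀ).trace = (Matrix.diagonal w).trace := by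
      rw [Matrix.mul_assoc, Matrix.trace_mul_comm, Matrix.mul_assoc, hQQ, Matrix.mul_one]
    rw [h1, Matrix.trace_diagonal]
  -- choose the p eigenvalues of smallest magnitude
  obtain ⟨T, hTcard, hTmin⟩ := exists_bottom (fun i => μ i ^ 2) p hpn
  set d' : Fin n → ℝ := fun i => if i ∈ T then 0 else μ i with hd'
  set W : Matrix (Fin n) (Fin n) ℝ := Q * Matrix.diagonal d' * Qᵀ with hW
  have hWsymmT : Wᵀ = W := by
    rw [hW, transpose_mul, transpose_mul, transpose_transpose, diagonal_transpose,
      Matrix.mul_assoc]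
  have hWsymm : W.IsSymm := hWsymmT
  have hWrank : W.rank ≤ n - p := by
    have h1 : W.rank ≤ (Matrix.diagonal d').rank := by
      rw [hW]
      exact le_trans (Matrix.rank_mul_le_left _ _) (Matrix.rank_mul_le_right _ _)
    rw [Matrix.rank_diagonal] at h1
    refine le_trans h1 ?_
    rw [Fintype.card_subtype]
    have h3 : Finset.univ.filter (fun i => d' i ≠ 0) ⊆ Tᶜ := by
      intro i hi
      rw [Finset.mem_compl]
      intro hiT
      have h4 : d' i = 0 := by rw [hd']; simp [hiT]
      exact (Finset.mem_filter.1 hi).2 h4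
    calc _ ≤ Tᶜ.card := Finset.card_le_card h3
    _ = n - p := by
        rw [Finset.card_compl, hTcard]
        simp
  have hSWdiag : S - W = Q * Matrix.diagonal (fun i => if i ∈ T then μ i else 0) * Qᵀ := by
    conv_lhs => rw [hspec, hW]
    rw [← Matrix.sub_mul, ← Matrix.mul_sub, Matrix.diagonal_sub]
    have harg : (fun i => μ i - d' i) = fun i => if i ∈ T then μ i else 0 := by
      funext i
      by_cases hi : i ∈ T <;> simp [hd', hi]
    rw [harg]
  have hfrobSW : frobSq (S - W) = ∑ i ∈ T, μ i ^ 2 := by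
    have hMsymm : (S - W)ᵀ = S - W := by rw [transpose_sub, hST, hWsymmT]
    rw [frobSq_eq_trace, hMsymm, hSWdiag, conj_mul, conj_trace]
    rw [← Finset.sum_filter_add_sum_filter_not Finset.univ (fun i => i ∈ T)]
    have hz2 : ∑ i ∈ Finset.univ.filter (fun i => ¬ i ∈ T),
        ((if i ∈ T then μ i else 0) * (if i ∈ T then μ i else 0)) = 0 := by
      apply Finset.sum_eq_zero
      intro i hi
      have := (Finset.mem_filter.1 hi).2
      simp [this]
    rw [hz2, add_zero]
    have hfT : Finset.univ.filter (fun i => i ∈ T) = T := by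
      ext i; simp
    rw [hfT]
    exact Finset.sum_congr rfl fun i hi => by simp [hi, sq]
  -- operator bound for the pseudoinverse factor
  have hopN : ∀ v : Fin p → ℝ, ∑ j, ((v ᵥ* (G⁻¹ * Yᵀ)) j) ^ 2 ≤ (RA ^ 2 / ε₂) * ∑ i, v i ^ 2 := by
    intro v
    have hrow : v ᵥ* (G⁻¹ * Yᵀ) = Y *ᵥ (G⁻¹ *ᵥ v) := by
      rw [← Matrix.vecMul_vecMul, Matrix.vecMul_transpose]
      congr 1
      conv_lhs => rw [← hGinvT]
      rw [Matrix.vecMul_transpose]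
    set z : Fin p → ℝ := G⁻¹ *ᵥ v with hzdef
    have hGz : G *ᵥ z = v := by
      rw [hzdef, Matrix.mulVec_mulVec, hG_mulinv, Matrix.one_mulVec]
    have hSg : ∑ i, (Y *ᵥ z) i ^ 2 = ∑ j, z j * v j := by
      rw [← hGdot, hGz]
      rfl
    have hCS := Finset.sum_mul_sq_le_sq_mul_sq Finset.univ z v
    have hlow := hYlow z
    rw [hrow]
    have hV : 0 ≤ ∑ j, v j ^ 2 := Finset.sum_nonneg fun j _ => sq_nonneg _
    have hSg0 : 0 ≤ ∑ i, (Y *ᵥ z) i ^ 2 := Finset.sum_nonneg fun i _ => sq_nonneg _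
    rw [div_mul_eq_mul_div, le_div_iff₀ hε₂]
    rcases eq_or_lt_of_le hSg0 with h | h
    · rw [← h, zero_mul]
      positivity
    · have hCS' : (∑ i, (Y *ᵥ z) i ^ 2) ^ 2 ≤ (∑ j, z j ^ 2) * ∑ j, v j ^ 2 := by
        rw [hSg]
        exact hCS
      have t1 : ε₂ * (∑ i, (Y *ᵥ z) i ^ 2) ^ 2 ≤ ε₂ * ((∑ j, z j ^ 2) * ∑ j, v j ^ 2) :=
        mul_le_mul_of_nonneg_left hCS' hε₂.le
      have t2 : (ε₂ * ∑ j, z j ^ 2) * (∑ j, v j ^ 2)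
          ≤ (RA ^ 2 * ∑ i, (Y *ᵥ z) i ^ 2) * (∑ j, v j ^ 2) :=
        mul_le_mul_of_nonneg_right hlow hV
      have t3 : (∑ i, (Y *ᵥ z) i ^ 2) * ε₂ * (∑ i, (Y *ᵥ z) i ^ 2)
          ≤ (RA ^ 2 * ∑ j, v j ^ 2) * (∑ i, (Y *ᵥ z) i ^ 2) := by nlinarith
      exact le_of_mul_le_mul_right t3 h
  have hSPbound : frobSq (S * P) ≤ (RA ^ 2 / ε₂) * ε₁ ^ 2 := by
    have h1 : S * P = (S * Y) * (G⁻¹ * Yᵀ) := by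
      rw [hPdef]
      simp only [Matrix.mul_assoc]
    rw [h1]
    calc frobSq ((S * Y) * (G⁻¹ * Yᵀ)) ≤ (RA ^ 2 / ε₂) * frobSq (S * Y) :=
          frobSq_mul_le_op _ _ hopN
    _ ≤ (RA ^ 2 / ε₂) * ε₁ ^ 2 :=
          mul_le_mul_of_nonneg_left hfrobSY (div_nonneg (sq_nonneg RA) hε₂.le)
  have hkyfan : ∑ i ∈ T, μ i ^ 2 ≤ ∑ i, μ i ^ 2 * r i := by
    apply ky_fan _ _ (fun i => sq_nonneg _) (fun i => (hr01 i).1) (fun i => (hr01 i).2) T hTmin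
    rw [hrsum, hTcard]
  refine ⟨W, hWsymm, hWrank, ?_⟩
  rw [hadj]
  have hδ0 : 0 ≤ δ := by
    rw [hδ]
    exact div_nonneg (mul_nonneg hε₁ hRA0) (Real.sqrt_nonneg _)
  apply frob_le_of _ _ hδ0
  have hδ2 : δ ^ 2 = (RA ^ 2 / ε₂) * ε₁ ^ 2 := by
    rw [hδ, div_pow, mul_pow, Real.sq_sqrt hε₂.le]
    ring
  rw [hδ2, hfrobSW]
  calc ∑ i ∈ T, μ i ^ 2 ≤ ∑ i, μ i ^ 2 * r i := hkyfan
  _ = frobSq (S * P) := hSP.symm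
  _ ≤ (RA ^ 2 / ε₂) * ε₁ ^ 2 := hSPbound
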